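/- arXiv:1708.07753 — 4 statements merged into one kernel-verified Lean document; each statement's English description precedes it below -/
import Mathlib

section
/- Let V be a real inner product space with a skew-adjoint complex structure R (R² = -id, ⟨Rx,Ry⟩ = ⟨x,y⟩). Let W ⊆ V be a subspace with orthogonal decomposition W = D₁ ⊕ D₂ where R(D₁) = D₁ and R(D₂) ⊆ W^⊥. Let μ be the orthogonal complement of R(D₂) in W^⊥. Then μ is R-invariant: R(μ) ⊆ μ. -/
/-! `R(D₂) ⊥ μ` and `W ⊥ μ` say that `μ = (D₁ ⊔ D₂ ⊔ R(D₂))ᗮ`. Since `R² = -1`, the space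
`D₁ ⊔ D₂ ⊔ R(D₂)` is `R`-invariant, and the orthogonal complement of an `R`-invariant subspace is
`R`-invariant because `R` is skew-adjoint. -/

open RealInnerProductSpace

section ComplexStructure

variable {V : Type*} [NormedAddCommGroup V] [InnerProductSpace ℝ V] {R : V →ₗ[ℝ] V}

theorem inner_map_left_eq_neg_inner_map_right (hR2 : ∀ x, R (R x) = -x)
    (hRiso : ∀ x y, ⟪R x, R y⟫ = ⟪x, y⟫) (x y : V) : ⟪R x, y⟫ = -⟪x, R y⟫ := by
  have h := hRiso x (R y)
  rw [hR2, inner_neg_right] at h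
  linarith

theorem Submodule.map_orthogonal_le_of_map_le (hR2 : ∀ x, R (R x) = -x)
    (hRiso : ∀ x y, ⟪R x, R y⟫ = ⟪x, y⟫) {K : Submodule ℝ V} (hK : K.map R ≤ K) :
    Kᗮ.map R ≤ Kᗮ := by
  rintro _ ⟨z, hz, rfl⟩ w hw
  rw [real_inner_comm, inner_map_left_eq_neg_inner_map_right hR2 hRiso, real_inner_comm,
    hz _ (hK (Submodule.mem_map_of_mem hw)), neg_zero]

theorem Submodule.map_map_of_sq_eq_neg (hR2 : ∀ x, R (R x) = -x) (K : Submodule ℝ V) :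
    (K.map R).map R = K := by
  have hRR : R ∘ₗ R = -LinearMap.id := LinearMap.ext hR2
  rw [← Submodule.map_comp, hRR, Submodule.map_neg, Submodule.map_id]

theorem Submodule.map_sup_map_self_le (hR2 : ∀ x, R (R x) = -x) (K : Submodule ℝ V) :
    (K ⊔ K.map R).map R ≤ K ⊔ K.map R := by
  rw [Submodule.map_sup, Submodule.map_map_of_sq_eq_neg hR2, sup_comm]

end ComplexStructure

theorem stmt2_general {V : Type*} [NormedAddCommGroup V] [InnerProductSpace ℝ V]
    (R : V →ₗ[ℝ] V)
    (hR2 : ∀ x, R (R x) = -x)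
    (hRiso : ∀ x y, ⟪R x, R y⟫ = ⟪x, y⟫)
    (W D₁ D₂ : Submodule ℝ V)
    (hW : D₁ ⊔ D₂ = W)
    (hD1 : D₁.map R = D₁) :
    (Wᗮ ⊓ (D₂.map R)ᗮ).map R ≤ Wᗮ ⊓ (D₂.map R)ᗮ := by
  rw [Submodule.inf_orthogonal, ← hW, sup_assoc]
  refine Submodule.map_orthogonal_le_of_map_le hR2 hRiso ?_
  rw [Submodule.map_sup, hD1]
  exact sup_le_sup_left (Submodule.map_sup_map_self_le hR2 D₂) D₁

/-- μ, the orthogonal complement of R(D₂) in W^⊥, is R-invariant. -/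
theorem stmt2 {V : Type*} [NormedAddCommGroup V] [InnerProductSpace ℝ V]
    (R : V →ₗ[ℝ] V)
    (hR2 : ∀ x, R (R x) = -x)
    (hRiso : ∀ x y, ⟪R x, R y⟫ = ⟪x, y⟫)
    (W D₁ D₂ : Submodule ℝ V)
    (hW : D₁ ⊔ D₂ = W)
    (horth : ∀ x ∈ D₁, ∀ y ∈ D₂, ⟪x, y⟫ = 0)
    (hD1 : D₁.map R = D₁)
    (hD2 : D₂.map R ≤ Wᗮ) :
    (Wᗮ ⊓ (D₂.map R)ᗮ).map R ≤ Wᗮ ⊓ (D₂.map R)ᗮ :=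
  stmt2_general R hR2 hRiso W D₁ D₂ hW hD1
end

section
/- Let V be a real inner product space with a skew-adjoint complex structure R, W ⊆ V a subspace with W = D₁ ⊕ D₂ (orthogonal), R(D₁) = D₁, R(D₂) ⊆ W^⊥, and μ the orthogonal complement of R(D₂) in W^⊥. For x ∈ W write Rx = φx + ωx with φx ∈ W and ωx ∈ W^⊥. Then φx ∈ D₁ and ωx ∈ R(D₂) for every x ∈ W. -/
open RealInnerProductSpace

/-! A sum of two disjoint submodules decomposes each vector uniquely. Since `R` maps `D₁` onto
itself and `D₂` into `Wᗮ`, `R x = R a + R b` for `x = a + b ∈ D₁ ⊕ D₂` is already the splitting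
of `R x` along `W ⊕ Wᗮ`, so it coincides with `p + q`. -/

theorem Submodule.eq_and_eq_of_add_eq_add_of_disjoint {R M : Type*} [Ring R] [AddCommGroup M]
    [Module R M] {N₁ N₂ : Submodule R M} (h : Disjoint N₁ N₂) {x x' y y' : M}
    (hx : x ∈ N₁) (hx' : x' ∈ N₁) (hy : y ∈ N₂) (hy' : y' ∈ N₂) (hxy : x + y = x' + y') :
    x = x' ∧ y = y' := by
  have := Submodule.disjoint_iff_add_eq_zero.mp h (N₁.sub_mem hx hx') (N₂.sub_mem hy hy')
    (by rw [sub_add_sub_comm, hxy, sub_self])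
  simpa only [sub_eq_zero] using this

theorem stmt3_general {V : Type*} [NormedAddCommGroup V] [InnerProductSpace ℝ V]
    (R : V →ₗ[ℝ] V)
    (W D₁ D₂ : Submodule ℝ V)
    (hW : D₁ ⊔ D₂ = W)
    (hD1 : D₁.map R = D₁)
    (hD2 : D₂.map R ≤ Wᗮ) :
    ∀ x ∈ W, ∀ p q : V, p ∈ W → q ∈ Wᗮ → R x = p + q →
      p ∈ D₁ ∧ q ∈ D₂.map R := by
  intro x hx p q hp hq hpq
  have hRx : R x ∈ D₁ ⊔ D₂.map R := by
    rw [← hD1, ← Submodule.map_sup, hW]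
    exact Submodule.mem_map_of_mem hx
  obtain ⟨a, ha, b, hb, hab⟩ := Submodule.mem_sup.mp hRx
  have hD1W : D₁ ≤ W := hW ▸ le_sup_left
  obtain ⟨rfl, rfl⟩ := Submodule.eq_and_eq_of_add_eq_add_of_disjoint W.orthogonal_disjoint
    (hD1W ha) hp (hD2 hb) hq (hab.trans hpq)
  exact ⟨ha, hb⟩

/-- for x ∈ W, writing Rx = φx + ωx with φx ∈ W and ωx ∈ W^⊥,
one has φx ∈ D₁ and ωx ∈ R(D₂). -/
theorem stmt3 {V : Type*} [NormedAddCommGroup V] [InnerProductSpace ℝ V]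
    (R : V →ₗ[ℝ] V)
    (hR2 : ∀ x, R (R x) = -x)
    (hRiso : ∀ x y, ⟪R x, R y⟫ = ⟪x, y⟫)
    (W D₁ D₂ : Submodule ℝ V)
    (hW : D₁ ⊔ D₂ = W)
    (horth : ∀ x ∈ D₁, ∀ y ∈ D₂, ⟪x, y⟫ = 0)
    (hD1 : D₁.map R = D₁)
    (hD2 : D₂.map R ≤ Wᗮ) :
    ∀ x ∈ W, ∀ p q : V, p ∈ W → q ∈ Wᗮ → R x = p + q →
      p ∈ D₁ ∧ q ∈ D₂.map R :=
  stmt3_general R W D₁ D₂ hW hD1 hD2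
end

section
/- Let V be a real inner product space with a skew-adjoint complex structure R, W ⊆ V with W = D₁ ⊕ D₂ (orthogonal), R(D₁) = D₁, R(D₂) ⊆ W^⊥. For z ∈ W^⊥ write Rz = Bz + Cz with Bz ∈ W and Cz ∈ W^⊥. Then Bz ∈ D₂, and ⟨Cz, Rv⟩ = 0 for all z ∈ W^⊥ and v ∈ D₂ (i.e., Cz lies in the orthogonal complement μ of R(D₂) in W^⊥). -/
open RealInnerProductSpace

/-
Bz ∈ D₂: Bz lies in W = D₁ ⊕ D₂, so it suffices that Bz ⊥ D₁. Since R preserves inner products,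
Rz ⊥ R(W) ⊇ R(D₁) = D₁, and Cz ⊥ W ⊇ D₁, hence Bz = Rz - Cz ⊥ D₁.

Cz ⊥ R(D₂): again Rz ⊥ R(W) ⊇ R(D₂), and Bz ∈ W ⊥ R(D₂) because R(D₂) ⊆ W^⊥.
-/

namespace Submodule

variable {𝕜 E F : Type*} [RCLike 𝕜] [NormedAddCommGroup E] [InnerProductSpace 𝕜 E]
  [NormedAddCommGroup F] [InnerProductSpace 𝕜 F]

theorem apply_mem_orthogonal_map_of_inner_map_map {f : E →ₗ[𝕜] F}
    (hf : ∀ x y, inner 𝕜 (f x) (f y) = inner 𝕜 x y) {K : Submodule 𝕜 E} {z : E}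
    (hz : z ∈ Kᗮ) : f z ∈ (K.map f)ᗮ :=
  ((map_orthogonal K (f.isometryOfInner hf)).le (mem_map_of_mem hz)).1

theorem IsOrtho.sup_inf_orthogonal_le {U V : Submodule 𝕜 E} (h : U ⟂ V) :
    (U ⊔ V) ⊓ Uᗮ ≤ V := by
  rintro _ ⟨hsup, hperp⟩
  obtain ⟨u, hu, v, hv, rfl⟩ := mem_sup.mp hsup
  have hu_perp : u ∈ Uᗮ := by
    simpa using sub_mem hperp (h.ge hv)
  have hu_zero : u = 0 := (mem_bot 𝕜).mp (U.inf_orthogonal_eq_bot ▸ mem_inf.mpr ⟨hu, hu_perp⟩)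
  simpa [hu_zero] using hv

end Submodule

theorem stmt4_general {V : Type*} [NormedAddCommGroup V] [InnerProductSpace ℝ V]
    (R : V →ₗ[ℝ] V)
    (hRiso : ∀ x y, ⟪R x, R y⟫ = ⟪x, y⟫)
    (W D₁ D₂ : Submodule ℝ V)
    (hW : D₁ ⊔ D₂ = W)
    (horth : ∀ x ∈ D₁, ∀ y ∈ D₂, ⟪x, y⟫ = 0)
    (hD1 : D₁.map R = D₁)
    (hD2 : D₂.map R ≤ Wᗮ) :
    ∀ z ∈ Wᗮ, ∀ b c : V, b ∈ W → c ∈ Wᗮ → R z = b + c →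
      b ∈ D₂ ∧ ∀ v ∈ D₂, ⟪c, R v⟫ = 0 := by
  intro z hz b c hb hc hsum
  have hRz : R z ∈ (W.map R)ᗮ := Submodule.apply_mem_orthogonal_map_of_inner_map_map hRiso hz
  have hD₁W : D₁ ≤ W := hW ▸ le_sup_left
  have hD₂W : D₂ ≤ W := hW ▸ le_sup_right
  constructor
  · have hb_perp : b ∈ D₁ᗮ := by
      have hD₁RW : D₁ ≤ W.map R := hD1 ▸ Submodule.map_mono hD₁W
      simpa [hsum] using sub_mem (Submodule.orthogonal_le hD₁RW hRz)
        (Submodule.orthogonal_le hD₁W hc)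
    exact (Submodule.isOrtho_iff_inner_eq.mpr horth).sup_inf_orthogonal_le ⟨hW ▸ hb, hb_perp⟩
  · have hc_perp : c ∈ (D₂.map R)ᗮ := by
      have hb_perp : b ∈ (D₂.map R)ᗮ := Submodule.orthogonal_le hD2 (W.le_orthogonal_orthogonal hb)
      simpa [hsum] using sub_mem (Submodule.orthogonal_le (Submodule.map_mono hD₂W) hRz) hb_perp
    exact fun v hv => Submodule.inner_left_of_mem_orthogonal (Submodule.mem_map_of_mem hv) hc_perp

/-- for z ∈ W^⊥, writing Rz = Bz + Cz with Bz ∈ W and Cz ∈ W^⊥,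
one has Bz ∈ D₂ and ⟨Cz, Rv⟩ = 0 for all v ∈ D₂. -/
theorem stmt4 {V : Type*} [NormedAddCommGroup V] [InnerProductSpace ℝ V]
    (R : V →ₗ[ℝ] V)
    (hR2 : ∀ x, R (R x) = -x)
    (hRiso : ∀ x y, ⟪R x, R y⟫ = ⟪x, y⟫)
    (W D₁ D₂ : Submodule ℝ V)
    (hW : D₁ ⊔ D₂ = W)
    (horth : ∀ x ∈ D₁, ∀ y ∈ D₂, ⟪x, y⟫ = 0)
    (hD1 : D₁.map R = D₁)
    (hD2 : D₂.map R ≤ Wᗮ) :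
    ∀ z ∈ Wᗮ, ∀ b c : V, b ∈ W → c ∈ Wᗮ → R z = b + c →
      b ∈ D₂ ∧ ∀ v ∈ D₂, ⟪c, R v⟫ = 0 :=
  stmt4_general R hRiso W D₁ D₂ hW horth hD1 hD2
end

section
/- Let V be a real inner product space with a skew-adjoint complex structure R and subspaces as above (W = D₁ ⊕ D₂, R(D₁) = D₁, R(D₂) ⊆ W^⊥). With B : W^⊥ → W the W-component of R, φ : W → W the W-component of R restricted to W, we have φ ∘ B = 0, i.e., φ(Bz) = 0 for every z ∈ W^⊥. -/
/-!
`R` is skew-adjoint (`R² = -1` and `R` is orthogonal), so `R b ∈ Wᗮ` as soon as `b` is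
orthogonal to `R(W) = D₁ ⊔ R(D₂)`. For `b` the `W`-component of `R z` with `z ∈ Wᗮ`, this holds:
`b ⊥ R(D₂)` because `R(D₂) ⊆ Wᗮ`, and `b ⊥ D₁` because both `R z` and the `Wᗮ`-component of
`R z` are orthogonal to the `R`-invariant subspace `D₁`. Hence the `W`-component of `R b` is `0`.
-/

open RealInnerProductSpace

namespace ComplexStructure

variable {V : Type*} [NormedAddCommGroup V] [InnerProductSpace ℝ V] {R : V →ₗ[ℝ] V}

theorem inner_map_right_eq_neg (hR2 : ∀ x, R (R x) = -x)
    (hRiso : ∀ x y, ⟪R x, R y⟫ = ⟪x, y⟫) (u w : V) : ⟪u, R w⟫ = -⟪R u, w⟫ := by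
  rw [← hRiso, hR2, inner_neg_right]

theorem map_mem_orthogonal (hR2 : ∀ x, R (R x) = -x)
    (hRiso : ∀ x y, ⟪R x, R y⟫ = ⟪x, y⟫) {W : Submodule ℝ V} {b : V}
    (hb : b ∈ (W.map R)ᗮ) : R b ∈ Wᗮ := fun w hw => by
  rw [inner_map_right_eq_neg hR2 hRiso, hb (R w) (Submodule.mem_map_of_mem hw), neg_zero]

theorem map_mem_orthogonal_of_map_eq (hRiso : ∀ x y, ⟪R x, R y⟫ = ⟪x, y⟫)
    {D : Submodule ℝ V} (hD : D.map R = D) {z : V} (hz : z ∈ Dᗮ) : R z ∈ Dᗮ := by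
  rw [← hD]
  rintro _ ⟨w, hw, rfl⟩
  rw [hRiso]
  exact hz w hw

end ComplexStructure

open ComplexStructure in
theorem stmt5_general {V : Type*} [NormedAddCommGroup V] [InnerProductSpace ℝ V]
    (R : V →ₗ[ℝ] V)
    (hR2 : ∀ x, R (R x) = -x)
    (hRiso : ∀ x y, ⟪R x, R y⟫ = ⟪x, y⟫)
    (W D₁ D₂ : Submodule ℝ V)
    (hW : D₁ ⊔ D₂ = W)
    (hD1 : D₁.map R = D₁)
    (hD2 : D₂.map R ≤ Wᗮ) :
    ∀ z ∈ Wᗮ, ∀ b c : V, b ∈ W → c ∈ Wᗮ → R z = b + c →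
      ∀ p q : V, p ∈ W → q ∈ Wᗮ → R b = p + q → p = 0 := by
  intro z hz b c hb hc hRz p q hp hq hRb
  have hWD₁ : Wᗮ ≤ D₁ᗮ := Submodule.orthogonal_le (hW ▸ le_sup_left)
  have hbD₁ : b ∈ D₁ᗮ := by
    rw [show b = R z - c by rw [hRz, add_sub_cancel_right]]
    exact sub_mem (map_mem_orthogonal_of_map_eq hRiso hD1 (hWD₁ hz)) (hWD₁ hc)
  have hbD₂ : b ∈ (D₂.map R)ᗮ :=
    Submodule.orthogonal_le hD2 (Submodule.le_orthogonal_orthogonal W hb)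
  have hRbW : R b ∈ Wᗮ := by
    refine map_mem_orthogonal hR2 hRiso ?_
    rw [← hW, Submodule.map_sup, hD1, ← Submodule.inf_orthogonal]
    exact ⟨hbD₁, hbD₂⟩
  have hpW : p ∈ Wᗮ := by
    rw [show p = R b - q by rw [hRb, add_sub_cancel_right]]
    exact sub_mem hRbW hq
  exact Submodule.disjoint_def.mp W.orthogonal_disjoint p hp hpW

/-- φ ∘ B = 0, i.e. the W-component of R(Bz) vanishes for every
z ∈ W^⊥. -/
theorem stmt5 {V : Type*} [NormedAddCommGroup V] [InnerProductSpace ℝ V]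
    (R : V →ₗ[ℝ] V)
    (hR2 : ∀ x, R (R x) = -x)
    (hRiso : ∀ x y, ⟪R x, R y⟫ = ⟪x, y⟫)
    (W D₁ D₂ : Submodule ℝ V)
    (hW : D₁ ⊔ D₂ = W)
    (horth : ∀ x ∈ D₁, ∀ y ∈ D₂, ⟪x, y⟫ = 0)
    (hD1 : D₁.map R = D₁)
    (hD2 : D₂.map R ≤ Wᗮ) :
    ∀ z ∈ Wᗮ, ∀ b c : V, b ∈ W → c ∈ Wᗮ → R z = b + c →
      ∀ p q : V, p ∈ W → q ∈ Wᗮ → R b = p + q → p = 0 :=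
  stmt5_general R hR2 hRiso W D₁ D₂ hW hD1 hD2
end
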